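/- The set ΠA_Γ of palindromic automorphisms of A_Γ forms a subgroup of Aut(A_Γ), and this group splits as a semidirect product ΠA_Γ ≅ ΠPA_Γ ⋊ D_Γ, where D_Γ is the subgroup of diagram automorphisms. -/

import Mathlib

namespace RaagPal

/-- The commutator relators defining the right-angled Artin group on a graph. -/
def raagRels {V : Type*} (G : SimpleGraph V) : Set (FreeGroup V) :=
  {r | ∃ i j : V, G.Adj i j ∧
    r = FreeGroup.of i * FreeGroup.of j * (FreeGroup.of i)⁻¹ * (FreeGroup.of j)⁻¹}

/-- The right-angled Artin group `A_Γ`. -/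
abbrev RAAG {V : Type*} (G : SimpleGraph V) := PresentedGroup (raagRels G)

/-- The generator of `A_Γ` corresponding to a vertex. -/
def gen {V : Type*} (G : SimpleGraph V) (i : V) : RAAG G := PresentedGroup.of i

/-- The element of `A_Γ` given by a single letter `v^{±1}`. -/
def letter {V : Type*} (G : SimpleGraph V) (p : V × Bool) : RAAG G :=
  if p.2 then gen G p.1 else (gen G p.1)⁻¹

/-- The element of `A_Γ` represented by a word on `V^{±1}`. -/
def wordProd {V : Type*} (G : SimpleGraph V) (L : List (V × Bool)) : RAAG G :=
  (L.map (letter G)).prod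

/-- An element of `A_Γ` is a palindrome if it is represented by a word equal to its reverse. -/
def IsPalindrome {V : Type*} (G : SimpleGraph V) (w : RAAG G) : Prop :=
  ∃ L : List (V × Bool), L.reverse = L ∧ wordProd G L = w

/-- A palindromic automorphism of `A_Γ`. -/
def IsPalAut {V : Type*} (G : SimpleGraph V) (α : MulAut (RAAG G)) : Prop :=
  ∀ i : V, IsPalindrome G (α (gen G i))

/-- A pure palindromic automorphism: each `α(v)` is a palindrome with middle letter `v^{±1}`. -/
def IsPurePalAut {V : Type*} (G : SimpleGraph V) (α : MulAut (RAAG G)) : Prop :=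
  ∀ i : V, ∃ (L : List (V × Bool)) (b : Bool),
    α (gen G i) = wordProd G (L ++ (i, b) :: L.reverse)

/-- `Dom G u v` means `u ≤ v`, i.e. `lk(u) ⊆ st(v)` : `v` dominates `u`. -/
def Dom {V : Type*} (G : SimpleGraph V) (u v : V) : Prop :=
  ∀ k : V, G.Adj k u → k = v ∨ G.Adj k v

/-- A diagram automorphism of `A_Γ`, induced by a graph automorphism of `Γ`. -/
def IsDiagramAut {V : Type*} (G : SimpleGraph V) (α : MulAut (RAAG G)) : Prop :=
  ∃ φ : G ≃g G, ∀ i : V, α (gen G i) = gen G (φ i)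

/-- An inversion `ι_j` of `A_Γ`. -/
def IsInversion {V : Type*} (G : SimpleGraph V) (α : MulAut (RAAG G)) : Prop :=
  ∃ j : V, α (gen G j) = (gen G j)⁻¹ ∧ ∀ k ≠ j, α (gen G k) = gen G k

/-- The dominated elementary palindromic automorphism `P_ij : v_i ↦ v_j v_i v_j`. -/
def IsPij {V : Type*} (G : SimpleGraph V) (i j : V) (α : MulAut (RAAG G)) : Prop :=
  i ≠ j ∧ Dom G i j ∧ α (gen G i) = gen G j * gen G i * gen G j ∧
    ∀ k ≠ i, α (gen G k) = gen G k

/-- A (well-defined) dominated elementary palindromic automorphism. -/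
def IsElemPal {V : Type*} (G : SimpleGraph V) (α : MulAut (RAAG G)) : Prop :=
  ∃ i j : V, IsPij G i j α

/-- An adjacent dominated transvection `τ_ij : v_i ↦ v_i v_j` with `v_i, v_j` adjacent. -/
def IsAdjTransvection {V : Type*} (G : SimpleGraph V) (α : MulAut (RAAG G)) : Prop :=
  ∃ i j : V, i ≠ j ∧ Dom G i j ∧ G.Adj i j ∧ α (gen G i) = gen G i * gen G j ∧
    ∀ k ≠ i, α (gen G k) = gen G k

/-- The exponent-sum homomorphism `A_Γ → ℤ` of the vertex `u`. -/
def expSum {V : Type*} [DecidableEq V] (G : SimpleGraph V) (u : V) :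
    RAAG G →* Multiplicative ℤ :=
  PresentedGroup.toGroup
    (f := fun i => Multiplicative.ofAdd (if i = u then (1 : ℤ) else 0))
    (by
      rintro r ⟨i, j, -, rfl⟩
      simp only [map_mul, map_inv, FreeGroup.lift_apply_of]
      rw [mul_comm (Multiplicative.ofAdd (if i = u then (1:ℤ) else 0))]
      group)

/-- The abelianisation vector of exponent sums of `w ∈ A_Γ`. -/
def abVec {n : ℕ} (G : SimpleGraph (Fin n)) (w : RAAG G) : Fin n → ℤ :=
  fun i => Multiplicative.toAdd (expSum G i w)

/-- The mod 2 abelianisation vector of `w ∈ A_Γ`. -/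
def mod2Vec {n : ℕ} (G : SimpleGraph (Fin n)) (w : RAAG G) : Fin n → ZMod 2 :=
  fun i => (abVec G w i : ZMod 2)

end RaagPal

/-!
An automorphism commutes with the reversal `R` (the anti-automorphism fixing every generator)
as soon as it maps the generators to `R`-fixed elements, and palindromes are `R`-fixed.
Conversely, by the normal form theorem for right-angled Artin groups (reduced words
representing the same element differ by shuffling commuting letters; proved with van der
Waerden's action on normal forms), an `R`-fixed element is `u c R(u)` with `c` a product of
pairwise commuting letters. Reading off its image in `H₁(A_Γ; ℤ/2)`: if this image is a basis
vector `eᵢ`, the element is a palindrome with middle letter `vᵢ^{±1}`; and two vertices with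
odd exponent are adjacent.

Hence `α` is pure palindromic iff it commutes with `R` and acts trivially on `H₁(A_Γ; ℤ/2)`,
and palindromic iff it commutes with `R` and acts on `H₁(A_Γ; ℤ/2)` by a permutation matrix
`P_σ`. The adjacency criterion, applied to `α(vᵢ) α(vⱼ)`, makes `σ` a graph automorphism, so
`P_σ` is the action of a diagram automorphism. Writing `ρ` for the mod 2 representation, this
gives `ΠA_Γ = Aut_R ∩ ρ⁻¹(ρ(D_Γ))` and `ΠPA_Γ = Aut_R ∩ ker ρ`, from which the splitting is
formal, `ρ` being injective on `D_Γ`.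
-/

namespace RaagPal

section Words

variable {V : Type*} {G : SimpleGraph V}

def invLetter (p : V × Bool) : V × Bool := (p.1, !p.2)

@[simp] lemma invLetter_invLetter (p : V × Bool) : invLetter (invLetter p) = p := by
  simp [invLetter]

@[simp] lemma invLetter_fst (p : V × Bool) : (invLetter p).1 = p.1 := rfl

@[simp] lemma letter_invLetter (p : V × Bool) : letter G (invLetter p) = (letter G p)⁻¹ := by
  rcases p with ⟨v, _ | _⟩ <;> simp [letter, invLetter]

@[simp] lemma letter_mk_true (v : V) : letter G (v, true) = gen G v := rfl

@[simp] lemma wordProd_nil : wordProd G [] = 1 := rfl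

@[simp] lemma wordProd_cons (p : V × Bool) (L : List (V × Bool)) :
    wordProd G (p :: L) = letter G p * wordProd G L := by
  simp [wordProd]

@[simp] lemma wordProd_append (A B : List (V × Bool)) :
    wordProd G (A ++ B) = wordProd G A * wordProd G B := by
  simp [wordProd]

lemma gen_commute {i j : V} (h : G.Adj i j) : Commute (gen G i) (gen G j) := by
  have hrel : gen G i * gen G j * (gen G i)⁻¹ * (gen G j)⁻¹ = 1 :=
    (QuotientGroup.eq_one_iff _).2 (Subgroup.subset_normalClosure ⟨i, j, h, rfl⟩)
  exact mul_inv_eq_one.1 (by simpa [mul_assoc] using hrel)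

lemma letter_commute_of_adj {p q : V × Bool} (h : G.Adj p.1 q.1) :
    Commute (letter G p) (letter G q) := by
  rcases p with ⟨a, _ | _⟩ <;> rcases q with ⟨c, _ | _⟩ <;>
    simp only [letter, Bool.false_eq_true, ite_true, ite_false, Commute.inv_left_iff,
      Commute.inv_right_iff] <;> exact gen_commute h

lemma letter_commute_of_fst_eq {p q : V × Bool} (h : p.1 = q.1) :
    Commute (letter G p) (letter G q) := by
  rcases p with ⟨a, _ | _⟩ <;> rcases q with ⟨c, _ | _⟩ <;> obtain rfl : a = c := h <;>
    simp [letter]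

lemma hom_ext {H : Type*} [Group H] {f g : RAAG G →* H}
    (h : ∀ i, f (gen G i) = g (gen G i)) : f = g :=
  PresentedGroup.ext h

lemma mulAut_ext {α β : MulAut (RAAG G)} (h : ∀ i, α (gen G i) = β (gen G i)) : α = β :=
  MulEquiv.toMonoidHom_injective (hom_ext h)

lemma exists_wordProd_eq (w : RAAG G) : ∃ L : List (V × Bool), wordProd G L = w := by
  obtain ⟨x, rfl⟩ := PresentedGroup.mk_surjective (raagRels G) w
  induction x using FreeGroup.induction_on with
  | C1 => exact ⟨[], rfl⟩
  | of v => exact ⟨[(v, true)], by simp [wordProd, letter]; rfl⟩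
  | inv_of v _ => exact ⟨[(v, false)], by simp [wordProd, letter]; rfl⟩
  | mul x y hx hy =>
      obtain ⟨Lx, hLx⟩ := hx
      obtain ⟨Ly, hLy⟩ := hy
      exact ⟨Lx ++ Ly, by simp [hLx, hLy]⟩

end Words

section Reversal

variable {V : Type*} {G : SimpleGraph V}

def revOp (G : SimpleGraph V) : RAAG G →* (RAAG G)ᵐᵒᵖ :=
  PresentedGroup.toGroup (f := fun i => MulOpposite.op (gen G i)) <| by
    rintro r ⟨i, j, hij, rfl⟩
    simp only [map_mul, map_inv, FreeGroup.lift_apply_of, ← MulOpposite.op_inv,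
      ← MulOpposite.op_mul, MulOpposite.op_eq_one_iff]
    rw [← (gen_commute hij).eq]
    group

def rev (G : SimpleGraph V) (w : RAAG G) : RAAG G := (revOp G w).unop

lemma rev_mul (x y : RAAG G) : rev G (x * y) = rev G y * rev G x := by
  simp [rev]

@[simp] lemma rev_one : rev G 1 = 1 := by simp [rev]

@[simp] lemma rev_inv (x : RAAG G) : rev G x⁻¹ = (rev G x)⁻¹ := by simp [rev]

@[simp] lemma rev_gen (i : V) : rev G (gen G i) = gen G i :=
  congrArg MulOpposite.unop (PresentedGroup.toGroup.of _)

@[simp] lemma rev_letter (p : V × Bool) : rev G (letter G p) = letter G p := by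
  rcases p with ⟨v, _ | _⟩ <;> simp [letter]

@[simp] lemma rev_zpow (x : RAAG G) (k : ℤ) : rev G (x ^ k) = rev G x ^ k := by
  simp [rev]

lemma wordProd_reverse (L : List (V × Bool)) :
    wordProd G L.reverse = rev G (wordProd G L) := by
  induction L with
  | nil => simp
  | cons p L ih => simp [ih, rev_mul]

@[simp] lemma rev_rev (w : RAAG G) : rev G (rev G w) = w := by
  obtain ⟨L, rfl⟩ := exists_wordProd_eq w
  rw [← wordProd_reverse, ← wordProd_reverse, List.reverse_reverse]

end Reversal

section Shuffle

variable {V : Type*} {G : SimpleGraph V}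

def Shuffle (G : SimpleGraph V) (L L' : List (V × Bool)) : Prop :=
  ∃ (A B : List (V × Bool)) (x y : V × Bool),
    G.Adj x.1 y.1 ∧ L = A ++ x :: y :: B ∧ L' = A ++ y :: x :: B

def ShuffleEquiv (G : SimpleGraph V) : List (V × Bool) → List (V × Bool) → Prop :=
  Relation.ReflTransGen (Shuffle G)

lemma Shuffle.symm {L L' : List (V × Bool)} (h : Shuffle G L L') : Shuffle G L' L := by
  obtain ⟨A, B, x, y, hadj, rfl, rfl⟩ := h
  exact ⟨A, B, y, x, hadj.symm, rfl, rfl⟩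

namespace ShuffleEquiv

variable {L M N : List (V × Bool)}

@[refl] lemma refl (L : List (V × Bool)) : ShuffleEquiv G L L := Relation.ReflTransGen.refl

lemma trans (h : ShuffleEquiv G L M) (h' : ShuffleEquiv G M N) : ShuffleEquiv G L N :=
  Relation.ReflTransGen.trans h h'

lemma symm (h : ShuffleEquiv G L M) : ShuffleEquiv G M L :=
  have : Std.Symm (Shuffle G) := ⟨fun _ _ => Shuffle.symm⟩
  Relation.ReflTransGen.stdSymm.symm _ _ h

lemma swap {x y : V × Bool} (h : G.Adj x.1 y.1) (L : List (V × Bool)) :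
    ShuffleEquiv G (x :: y :: L) (y :: x :: L) :=
  Relation.ReflTransGen.single ⟨[], L, x, y, h, rfl, rfl⟩

lemma append_left (C : List (V × Bool)) (h : ShuffleEquiv G L M) :
    ShuffleEquiv G (C ++ L) (C ++ M) := by
  refine Relation.ReflTransGen.lift (C ++ ·) ?_ _ _ h
  rintro _ _ ⟨A, B, x, y, hadj, rfl, rfl⟩
  exact ⟨C ++ A, B, x, y, hadj, by simp, by simp⟩

lemma cons (p : V × Bool) (h : ShuffleEquiv G L M) : ShuffleEquiv G (p :: L) (p :: M) :=
  h.append_left [p]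

lemma reverse (h : ShuffleEquiv G L M) : ShuffleEquiv G L.reverse M.reverse := by
  refine Relation.ReflTransGen.lift List.reverse ?_ _ _ h
  rintro _ _ ⟨A, B, x, y, hadj, rfl, rfl⟩
  exact ⟨B.reverse, A.reverse, y, x, hadj.symm, by simp, by simp⟩

lemma append_right (C : List (V × Bool)) (h : ShuffleEquiv G L M) :
    ShuffleEquiv G (L ++ C) (M ++ C) := by
  simpa using (h.reverse.append_left C.reverse).reverse

lemma perm (h : ShuffleEquiv G L M) : L.Perm M := by
  induction h with
  | refl => rfl
  | tail _ hs ih =>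
      obtain ⟨A, B, x, y, -, rfl, rfl⟩ := hs
      exact ih.trans ((List.Perm.swap y x B).append_left A)

lemma length_eq (h : ShuffleEquiv G L M) : L.length = M.length := h.perm.length_eq

lemma wordProd_eq (h : ShuffleEquiv G L M) : wordProd G L = wordProd G M := by
  induction h with
  | refl => rfl
  | tail _ hs ih =>
      obtain ⟨A, B, x, y, hadj, rfl, rfl⟩ := hs
      simp only [ih, wordProd_append, wordProd_cons, ← mul_assoc,
        (letter_commute_of_adj hadj).eq]

lemma move_front {x : V × Bool} {A : List (V × Bool)} (hA : ∀ r ∈ A, G.Adj x.1 r.1)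
    (B : List (V × Bool)) : ShuffleEquiv G (A ++ x :: B) (x :: (A ++ B)) := by
  induction A with
  | nil => rfl
  | cons a A ih =>
      simp only [List.forall_mem_cons] at hA
      exact ((ih hA.2).cons a).trans (swap hA.1.symm _)

lemma move_back {x : V × Bool} {B : List (V × Bool)} (hB : ∀ r ∈ B, G.Adj x.1 r.1) :
    ShuffleEquiv G (x :: B) (B ++ [x]) := by
  simpa using (move_front (A := B.reverse) (B := []) (by simpa using hB)).reverse

end ShuffleEquiv

variable [DecidableEq V]

def proj (a b : V) (L : List (V × Bool)) : List (V × Bool) :=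
  L.filter (fun p => p.1 = a ∨ p.1 = b)

lemma proj_cons (a b : V) (p : V × Bool) (L : List (V × Bool)) :
    proj a b (p :: L) = if p.1 = a ∨ p.1 = b then p :: proj a b L else proj a b L := by
  simp [proj, List.filter_cons]

lemma proj_append (a b : V) (L M : List (V × Bool)) :
    proj a b (L ++ M) = proj a b L ++ proj a b M := List.filter_append ..

lemma mem_proj {a b : V} {p : V × Bool} {L : List (V × Bool)} :
    p ∈ proj a b L ↔ p ∈ L ∧ (p.1 = a ∨ p.1 = b) := by
  simp [proj]

lemma proj_eq_of_proj_cons_eq {a b : V} {p : V × Bool} {L M : List (V × Bool)}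
    (h : proj a b (p :: L) = proj a b (p :: M)) : proj a b L = proj a b M := by
  rw [proj_cons, proj_cons] at h
  split_ifs at h
  · exact List.cons_injective h
  · exact h

/-- Swaps only exchange letters at adjacent vertices, which never both survive in `proj a b`. -/
lemma ShuffleEquiv.proj_eq {L M : List (V × Bool)} (h : ShuffleEquiv G L M) {a b : V}
    (hab : ¬ G.Adj a b) : proj a b L = proj a b M := by
  induction h with
  | refl => rfl
  | tail _ hs ih =>
      obtain ⟨A, B, x, y, hadj, rfl, rfl⟩ := hs
      rw [ih, proj_append, proj_append, proj_cons, proj_cons, proj_cons, proj_cons]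
      have : ¬ ((x.1 = a ∨ x.1 = b) ∧ (y.1 = a ∨ y.1 = b)) := by
        rintro ⟨hx | hx, hy | hy⟩ <;> rw [hx, hy] at hadj <;>
          first | exact G.irrefl hadj | exact hab hadj | exact hab hadj.symm
      split_ifs <;> simp_all

/-- Look at the first letter of `M` at the vertex of `x`: comparing `proj x.1 x.1` shows that it
is `x`, and comparing `proj x.1 r.1` shows that every earlier letter `r` commutes with `x`. -/
lemma exists_eq_append_cons_of_proj_eq {x : V × Bool} {L M : List (V × Bool)}
    (h : ∀ a b, ¬ G.Adj a b → proj a b (x :: L) = proj a b M) :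
    ∃ A B, M = A ++ x :: B ∧ ∀ r ∈ A, G.Adj x.1 r.1 := by
  have hx : x ∈ proj x.1 x.1 M := by rw [← h _ _ G.irrefl]; simp [proj]
  obtain ⟨z, hz⟩ := Option.isSome_iff_exists.1
    (List.find?_isSome (p := fun p => p.1 = x.1).2 ⟨x, (mem_proj.1 hx).1, by simp⟩)
  obtain ⟨hzv, A, B, rfl, hA⟩ := List.find?_eq_some_iff_append.1 hz
  simp only [decide_eq_true_eq, Bool.not_eq_true', decide_eq_false_iff_not] at hzv hA
  have hnil : proj x.1 x.1 A = [] := List.filter_eq_nil_iff.2 (by simpa using hA)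
  obtain rfl : z = x := by
    have := h x.1 x.1 G.irrefl
    rw [proj_cons, if_pos (Or.inl rfl), proj_append, hnil, List.nil_append, proj_cons,
      if_pos (Or.inl hzv)] at this
    exact (List.cons.inj this).1.symm
  refine ⟨A, B, rfl, fun r hr => by_contra fun hadj => ?_⟩
  have := h z.1 r.1 hadj
  rw [proj_cons, if_pos (Or.inl rfl), proj_append] at this
  obtain ⟨q, t, hqt⟩ :=
    List.exists_cons_of_ne_nil (List.ne_nil_of_mem (mem_proj.2 ⟨hr, Or.inr rfl⟩))
  rw [hqt, List.cons_append] at this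
  obtain rfl := (List.cons.inj this).1
  exact hA z (mem_proj.1 (hqt ▸ List.mem_cons_self)).1 rfl

lemma shuffleEquiv_of_proj_eq {L M : List (V × Bool)}
    (h : ∀ a b, ¬ G.Adj a b → proj a b L = proj a b M) : ShuffleEquiv G L M := by
  induction L generalizing M with
  | nil =>
      cases M with
      | nil => rfl
      | cons q M => simpa [proj, List.filter_cons] using h q.1 q.1 G.irrefl
  | cons x L ih =>
      obtain ⟨A, B, rfl, hA⟩ := exists_eq_append_cons_of_proj_eq h
      have hmove := ShuffleEquiv.move_front hA B
      refine ((ih fun a b hab => proj_eq_of_proj_cons_eq (p := x) ?_).cons x).trans hmove.symm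
      exact (h a b hab).trans (hmove.proj_eq hab)

end Shuffle

namespace ShuffleEquiv

variable {V : Type*} {G : SimpleGraph V} {L M : List (V × Bool)}

lemma of_cons {x : V × Bool} (h : ShuffleEquiv G (x :: L) (x :: M)) : ShuffleEquiv G L M := by
  classical
  exact shuffleEquiv_of_proj_eq fun a b hab => proj_eq_of_proj_cons_eq (h.proj_eq hab)

lemma exists_of_cons {x : V × Bool} (h : ShuffleEquiv G (x :: L) M) :
    ∃ A B, M = A ++ x :: B ∧ (∀ r ∈ A, G.Adj x.1 r.1) ∧ ShuffleEquiv G L (A ++ B) := by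
  classical
  obtain ⟨A, B, rfl, hA⟩ := exists_eq_append_cons_of_proj_eq fun a b hab => h.proj_eq hab
  exact ⟨A, B, rfl, hA, (h.trans (move_front hA B)).of_cons⟩

lemma of_append_singleton {x : V × Bool} (h : ShuffleEquiv G (L ++ [x]) (M ++ [x])) :
    ShuffleEquiv G L M := by
  have h' : ShuffleEquiv G (x :: L.reverse) (x :: M.reverse) := by simpa using h.reverse
  simpa using h'.of_cons.reverse

lemma exists_of_append_singleton {x : V × Bool} (h : ShuffleEquiv G L (M ++ [x])) :
    ∃ A B, L = A ++ x :: B ∧ ∀ r ∈ B, G.Adj x.1 r.1 := by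
  obtain ⟨A, B, hL, hA, -⟩ := (by simpa using h.symm.reverse :
    ShuffleEquiv G (x :: M.reverse) L.reverse).exists_of_cons
  exact ⟨B.reverse, A.reverse, by simpa using congrArg List.reverse hL, by simpa using hA⟩

end ShuffleEquiv

section NormalForm

variable {V : Type*} {G : SimpleGraph V} {L M : List (V × Bool)} {x y : V × Bool}

def StartsWith (G : SimpleGraph V) (L : List (V × Bool)) (x : V × Bool) : Prop :=
  ∃ K, ShuffleEquiv G L (x :: K)

def IsReduced (G : SimpleGraph V) (L : List (V × Bool)) : Prop :=
  ∀ A B y, ¬ ShuffleEquiv G L (A ++ y :: invLetter y :: B)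

lemma startsWith_of_shuffleEquiv_cons (hxy : x ≠ y) (h : ShuffleEquiv G (x :: L) (y :: M)) :
    StartsWith G M x := by
  obtain ⟨A, B, hA, hadj, -⟩ := h.exists_of_cons
  cases A with
  | nil => exact absurd (List.cons.inj hA).1.symm hxy
  | cons a A =>
      obtain ⟨rfl, rfl⟩ := List.cons.inj hA
      simp only [List.forall_mem_cons] at hadj
      exact ⟨A ++ B, .move_front hadj.2 B⟩

lemma isReduced_nil : IsReduced G ([] : List (V × Bool)) := fun A B y h => by
  simpa using h.length_eq

lemma IsReduced.of_shuffleEquiv (hL : IsReduced G L) (h : ShuffleEquiv G L M) :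
    IsReduced G M := fun A B y hM => hL A B y (h.trans hM)

lemma IsReduced.of_append_left (h : IsReduced G (L ++ M)) : IsReduced G L :=
  fun A B y hL => h A (B ++ M) y (by simpa using hL.append_right M)

lemma IsReduced.of_append_right (h : IsReduced G (L ++ M)) : IsReduced G M :=
  fun A B y hM => h (L ++ A) B y (by simpa using hM.append_left L)

lemma IsReduced.tail (h : IsReduced G (x :: L)) : IsReduced G L :=
  h.of_append_right (L := [x])

lemma IsReduced.reverse (h : IsReduced G L) : IsReduced G L.reverse :=
  fun A B y hL => h B.reverse A.reverse (invLetter y) (by simpa using hL.reverse)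

lemma IsReduced.not_startsWith (h : IsReduced G (x :: L)) : ¬ StartsWith G L (invLetter x) :=
  fun ⟨K, hK⟩ => h [] K x (hK.cons x)

lemma not_startsWith_cons (hxy : x ≠ y) (h : ¬ StartsWith G L x) :
    ¬ StartsWith G (y :: L) x :=
  fun ⟨_, hK⟩ => h (startsWith_of_shuffleEquiv_cons hxy hK.symm)

lemma IsReduced.cons (hL : IsReduced G L) (hx : ¬ StartsWith G L (invLetter x)) :
    IsReduced G (x :: L) := by
  intro A B y h
  obtain ⟨W₁, W₂, hW, hadj, hLW⟩ := h.exists_of_cons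
  have hxy (hyx : y = x) (hW₂ : W₂ = invLetter x :: B) : False := by
    subst hyx hW₂
    exact hx ⟨W₁ ++ B, hLW.trans (.move_front (by simpa using hadj) B)⟩
  rcases List.append_eq_append_iff.1 hW with ⟨as, rfl, has⟩ | ⟨bs, rfl, hbs⟩
  · rcases as with _ | ⟨a, _ | ⟨a', as⟩⟩
    · simp only [List.nil_append, List.cons.injEq] at has
      exact hxy has.1 (has.1 ▸ has.2.symm)
    · obtain ⟨rfl, rfl, rfl⟩ : y = a ∧ invLetter y = x ∧ B = W₂ := by simpa using has
      simpa using hadj _ (List.mem_append_right _ (List.mem_singleton_self _))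
    · obtain ⟨rfl, rfl, rfl⟩ : y = a ∧ invLetter y = a' ∧ B = as ++ x :: W₂ := by
        simpa using has
      exact hL A (as ++ W₂) y (by simpa using hLW)
  · rcases bs with _ | ⟨b, bs⟩
    · simp only [List.nil_append, List.cons.injEq] at hbs
      exact hxy hbs.1.symm (hbs.1 ▸ hbs.2)
    · obtain ⟨rfl, rfl⟩ : x = b ∧ W₂ = bs ++ y :: invLetter y :: B := by simpa using hbs
      exact hL (W₁ ++ bs) B y (by simpa using hLW)

def reducedSetoid (G : SimpleGraph V) : Setoid {L : List (V × Bool) // IsReduced G L} where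
  r L M := ShuffleEquiv G L.1 M.1
  iseqv := ⟨fun L => .refl L.1, .symm, .trans⟩

def NormalForm (G : SimpleGraph V) := Quotient (reducedSetoid G)

def NormalForm.mk (L : List (V × Bool)) (hL : IsReduced G L) : NormalForm G :=
  Quotient.mk _ ⟨L, hL⟩

@[elab_as_elim]
lemma NormalForm.ind {motive : NormalForm G → Prop}
    (mk : ∀ L hL, motive (NormalForm.mk L hL)) (z : NormalForm G) : motive z :=
  Quotient.ind (fun L => mk L.1 L.2) z

lemma NormalForm.mk_eq_mk {hL : IsReduced G L} {hM : IsReduced G M} :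
    NormalForm.mk L hL = NormalForm.mk M hM ↔ ShuffleEquiv G L M :=
  Quotient.eq

open Classical in
noncomputable def letterAct (x : V × Bool) : NormalForm G → NormalForm G :=
  Quotient.lift
    (fun L => if h : StartsWith G L.1 (invLetter x) then
        NormalForm.mk h.choose ((L.2.of_shuffleEquiv h.choose_spec).of_append_right (L := [_]))
      else NormalForm.mk (x :: L.1) (L.2.cons h))
    (by
      rintro ⟨L, hL⟩ ⟨M, hM⟩ (hLM : ShuffleEquiv G L M)
      by_cases h : StartsWith G L (invLetter x)
      · have h' : StartsWith G M (invLetter x) := ⟨h.choose, hLM.symm.trans h.choose_spec⟩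
        rw [dif_pos h, dif_pos h']
        exact NormalForm.mk_eq_mk.2 (h.choose_spec.symm.trans (hLM.trans h'.choose_spec)).of_cons
      · have h' : ¬ StartsWith G M (invLetter x) := fun ⟨K, hK⟩ => h ⟨K, hLM.trans hK⟩
        rw [dif_neg h, dif_neg h']
        exact NormalForm.mk_eq_mk.2 (hLM.cons x))

lemma letterAct_mk_of_shuffleEquiv {K : List (V × Bool)} (hL : IsReduced G L)
    (hK : IsReduced G K) (h : ShuffleEquiv G L (invLetter x :: K)) :
    letterAct x (NormalForm.mk L hL) = NormalForm.mk K hK := by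
  have hs : StartsWith G L (invLetter x) := ⟨K, h⟩
  rw [letterAct, NormalForm.mk, Quotient.lift_mk, dif_pos hs]
  exact NormalForm.mk_eq_mk.2 (hs.choose_spec.symm.trans h).of_cons

lemma letterAct_mk_of_not_startsWith (hL : IsReduced G L)
    (h : ¬ StartsWith G L (invLetter x)) :
    letterAct x (NormalForm.mk L hL) = NormalForm.mk (x :: L) (hL.cons h) := by
  rw [letterAct, NormalForm.mk, Quotient.lift_mk, dif_neg h]

lemma letterAct_invLetter_letterAct (x : V × Bool) (z : NormalForm G) :
    letterAct (invLetter x) (letterAct x z) = z := by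
  induction z using NormalForm.ind with | mk L hL => ?_
  by_cases h : StartsWith G L (invLetter x)
  · obtain ⟨K, hK⟩ := h
    have hxK : IsReduced G (invLetter x :: K) := hL.of_shuffleEquiv hK
    rw [letterAct_mk_of_shuffleEquiv hL hxK.tail hK,
      letterAct_mk_of_not_startsWith _ (by simpa using hxK.not_startsWith)]
    exact NormalForm.mk_eq_mk.2 hK.symm
  · rw [letterAct_mk_of_not_startsWith hL h, letterAct_mk_of_shuffleEquiv _ hL (by simp; rfl)]

lemma letterAct_comm_of_startsWith (hadj : G.Adj x.1 y.1) (hL : IsReduced G L)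
    (hY : StartsWith G L (invLetter y)) (hX : ¬ StartsWith G L (invLetter x)) :
    letterAct x (letterAct y (NormalForm.mk L hL)) =
      letterAct y (letterAct x (NormalForm.mk L hL)) := by
  obtain ⟨K, hK⟩ := hY
  have hKred : IsReduced G K := (hL.of_shuffleEquiv hK).tail
  have hXK : ¬ StartsWith G K (invLetter x) := fun ⟨M, hM⟩ =>
    hX ⟨_, (hK.trans (hM.cons _)).trans (.swap (by simpa using hadj.symm) M)⟩
  rw [letterAct_mk_of_shuffleEquiv hL hKred hK, letterAct_mk_of_not_startsWith hKred hXK,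
    letterAct_mk_of_not_startsWith hL hX, letterAct_mk_of_shuffleEquiv _ (hKred.cons hXK)
      ((hK.cons x).trans (.swap (by simpa using hadj) K))]

lemma letterAct_comm (hadj : G.Adj x.1 y.1) (z : NormalForm G) :
    letterAct x (letterAct y z) = letterAct y (letterAct x z) := by
  induction z using NormalForm.ind with | mk L hL => ?_
  have hne : x.1 ≠ y.1 := G.ne_of_adj hadj
  by_cases hX : StartsWith G L (invLetter x) <;> by_cases hY : StartsWith G L (invLetter y)
  · obtain ⟨Kx, hKx⟩ := hX
    obtain ⟨Ky, hKy⟩ := hY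
    have hne' : invLetter x ≠ invLetter y := fun h => hne (by simpa using congrArg Prod.fst h)
    obtain ⟨M, hM⟩ := startsWith_of_shuffleEquiv_cons hne' (hKx.symm.trans hKy)
    obtain ⟨M', hM'⟩ := startsWith_of_shuffleEquiv_cons hne'.symm (hKy.symm.trans hKx)
    have hKxr := (hL.of_shuffleEquiv hKx).tail
    have hKyr := (hL.of_shuffleEquiv hKy).tail
    rw [letterAct_mk_of_shuffleEquiv hL hKyr hKy, letterAct_mk_of_shuffleEquiv hL hKxr hKx,
      letterAct_mk_of_shuffleEquiv hKyr (hKyr.of_shuffleEquiv hM).tail hM,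
      letterAct_mk_of_shuffleEquiv hKxr (hKxr.of_shuffleEquiv hM').tail hM']
    refine NormalForm.mk_eq_mk.2 (ShuffleEquiv.of_cons (x := invLetter x)
      (ShuffleEquiv.of_cons (x := invLetter y) ?_))
    exact ((hM.cons _).symm.trans hKy.symm).trans
      (hKx.trans ((hM'.cons _).trans (.swap (by simpa using hadj) M')))
  · exact (letterAct_comm_of_startsWith hadj.symm hL hX hY).symm
  · exact letterAct_comm_of_startsWith hadj hL hY hX
  · have hXy := not_startsWith_cons (y := y) (fun h => hne (by rw [← h]; rfl)) hX
    have hYx := not_startsWith_cons (y := x) (fun h => hne.symm (by rw [← h]; rfl)) hY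
    rw [letterAct_mk_of_not_startsWith hL hX, letterAct_mk_of_not_startsWith hL hY,
      letterAct_mk_of_not_startsWith _ hXy, letterAct_mk_of_not_startsWith _ hYx]
    exact NormalForm.mk_eq_mk.2 (.swap hadj L)

noncomputable def letterPerm (x : V × Bool) : Equiv.Perm (NormalForm G) where
  toFun := letterAct x
  invFun := letterAct (invLetter x)
  left_inv := letterAct_invLetter_letterAct x
  right_inv z := by simpa using letterAct_invLetter_letterAct (invLetter x) z

noncomputable def toPerm (G : SimpleGraph V) : RAAG G →* Equiv.Perm (NormalForm G) :=
  PresentedGroup.toGroup (f := fun v => letterPerm (v, true)) <| by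
    rintro r ⟨i, j, hij, rfl⟩
    have : letterPerm (G := G) (i, true) * letterPerm (j, true) =
        letterPerm (j, true) * letterPerm (i, true) :=
      Equiv.ext (letterAct_comm hij)
    simp only [map_mul, map_inv, FreeGroup.lift_apply_of, this]
    group

lemma toPerm_letter (p : V × Bool) : toPerm G (letter G p) = letterPerm p := by
  have hgen (v : V) : toPerm G (gen G v) = letterPerm (v, true) := PresentedGroup.toGroup.of _
  obtain ⟨v, _ | _⟩ := p
  · rw [letter, if_neg Bool.false_ne_true, map_inv, hgen]
    exact inv_eq_of_mul_eq_one_left (Equiv.ext (letterAct_invLetter_letterAct (v, true)))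
  · exact hgen v

lemma toPerm_wordProd (hL : IsReduced G L) :
    toPerm G (wordProd G L) (NormalForm.mk [] isReduced_nil) = NormalForm.mk L hL := by
  induction L with
  | nil => rfl
  | cons p L ih =>
      rw [wordProd_cons, map_mul, Equiv.Perm.mul_apply, ih hL.tail, toPerm_letter]
      exact letterAct_mk_of_not_startsWith _ hL.not_startsWith

theorem ShuffleEquiv.of_wordProd_eq (hL : IsReduced G L) (hM : IsReduced G M)
    (h : wordProd G L = wordProd G M) : ShuffleEquiv G L M :=
  NormalForm.mk_eq_mk.1 ((toPerm_wordProd hL).symm.trans (h ▸ toPerm_wordProd hM))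

lemma exists_isReduced_wordProd_eq (w : RAAG G) :
    ∃ L, IsReduced G L ∧ wordProd G L = w := by
  obtain ⟨L, rfl⟩ := exists_wordProd_eq w
  induction h : L.length using Nat.strong_induction_on generalizing L with
  | _ n ih =>
  by_cases hL : IsReduced G L
  · exact ⟨L, hL, rfl⟩
  simp only [IsReduced, not_forall, not_not] at hL
  obtain ⟨A, B, y, hs⟩ := hL
  obtain ⟨M, hM, hMw⟩ := ih _ (by have := hs.length_eq; simp at this ⊢; omega) (A ++ B) rfl
  exact ⟨M, hM, by simp [hMw, hs.wordProd_eq]⟩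

end NormalForm

section RevFixed

variable {V : Type*} {G : SimpleGraph V}

def vertices (C : List (V × Bool)) : Set V := {v | ∃ p ∈ C, p.1 = v}

lemma vertices_cons (p : V × Bool) (C : List (V × Bool)) :
    vertices (p :: C) = insert p.1 (vertices C) := by
  ext v; simp [vertices, eq_comm]

lemma commute_letter_of_isClique {C : List (V × Bool)} (hC : G.IsClique (vertices C))
    {p q : V × Bool} (hp : p ∈ C) (hq : q ∈ C) : Commute (letter G p) (letter G q) := by
  by_cases h : p.1 = q.1
  · exact letter_commute_of_fst_eq h
  · exact letter_commute_of_adj (hC ⟨p, hp, rfl⟩ ⟨q, hq, rfl⟩ h)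

lemma isClique_vertices_of_sublist {C C' : List (V × Bool)} (hC : G.IsClique (vertices C))
    (h : C'.Sublist C) : G.IsClique (vertices C') :=
  hC.subset <| by rintro _ ⟨p, hp, rfl⟩; exact ⟨p, h.subset hp, rfl⟩

lemma wordProd_perm_of_isClique {C C' : List (V × Bool)} (hC : G.IsClique (vertices C))
    (h : C'.Perm C) : wordProd G C' = wordProd G C :=
  (h.map (letter G)).prod_eq' <| List.pairwise_map.2 <| List.pairwise_of_forall_mem_list
    fun _ hp _ hq => commute_letter_of_isClique hC (h.subset hp) (h.subset hq)

lemma exists_wordProd_eq_zpow {D : List (V × Bool)} {i : V} (h : ∀ p ∈ D, p.1 = i) :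
    ∃ k : ℤ, wordProd G D = gen G i ^ k := by
  induction D with
  | nil => exact ⟨0, by simp⟩
  | cons p D ih =>
      simp only [List.forall_mem_cons] at h
      obtain ⟨k, hk⟩ := ih h.2
      obtain ⟨v, _ | _⟩ := p <;> obtain rfl : v = i := h.1
      · exact ⟨-1 + k, by simp [letter, hk, zpow_add]⟩
      · exact ⟨1 + k, by simp [hk, zpow_add]⟩

lemma commute_gen_of_mem_filter [DecidableEq V] {C : List (V × Bool)}
    (hC : G.IsClique (vertices C)) {i : V} (hi : i ∈ vertices C) {q : V × Bool}
    (hq : q ∈ C.filter (·.1 ≠ i)) : Commute (gen G i) (gen G q.1) :=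
  gen_commute (hC hi ⟨q, List.mem_of_mem_filter hq, rfl⟩
    (Ne.symm (by simpa using (List.mem_filter.1 hq).2)))

lemma exists_wordProd_eq_zpow_mul_of_isClique [DecidableEq V] {C : List (V × Bool)}
    (hC : G.IsClique (vertices C)) (i : V) :
    ∃ k : ℤ, wordProd G C = gen G i ^ k * wordProd G (C.filter (·.1 ≠ i)) := by
  obtain ⟨k, hk⟩ := exists_wordProd_eq_zpow (G := G) (D := C.filter (·.1 = i)) (i := i)
    (by simp)
  refine ⟨k, ?_⟩
  rw [← hk, ← wordProd_append]
  exact (wordProd_perm_of_isClique hC (by simpa using List.filter_append_perm (·.1 = i) C)).symm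

/-- The first letter of `L` also occurs last in `L.reverse`; either it commutes with all of
`L` and joins the clique in the middle, or it pairs off with a last letter of `L` equal to
it, and we recurse on what lies between. -/
lemma exists_clique_of_shuffleEquiv_reverse {L : List (V × Bool)} (hL : IsReduced G L)
    (h : ShuffleEquiv G L L.reverse) :
    ∃ U C, G.IsClique (vertices C) ∧ ShuffleEquiv G L (U ++ C ++ U.reverse) := by
  induction hn : L.length using Nat.strong_induction_on generalizing L with
  | _ n ih =>
  cases L with
  | nil => exact ⟨[], [], by simp [vertices], .refl _⟩
  | cons p M =>
    rw [List.reverse_cons] at h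
    obtain ⟨A, B, hAB, hB⟩ := h.exists_of_append_singleton
    cases A with
    | nil =>
      obtain rfl : M = B := (List.cons.inj hAB).2
      have hM : ShuffleEquiv G M M.reverse :=
        (h.trans (ShuffleEquiv.move_back (by simpa using hB)).symm).of_cons
      obtain ⟨U, C, hC, hMUC⟩ := ih M.length (by simp [← hn]) hL.tail hM rfl
      have hmem : ∀ r ∈ U ++ C ++ U.reverse, G.Adj p.1 r.1 := fun r hr =>
        hB r (hMUC.perm.mem_iff.2 hr)
      refine ⟨U, p :: C, ?_, ?_⟩
      · rw [vertices_cons, SimpleGraph.isClique_insert]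
        refine ⟨hC, ?_⟩
        rintro _ ⟨q, hq, rfl⟩ -
        exact hmem q (by simp [hq])
      · have := ShuffleEquiv.move_front (x := p) (A := U) (fun r hr => hmem r (by simp [hr]))
          (C ++ U.reverse)
        exact (hMUC.cons p).trans (by simpa using this.symm)
    | cons a A =>
      obtain ⟨rfl, rfl⟩ := List.cons.inj hAB
      have hLN : ShuffleEquiv G (p :: (A ++ p :: B)) (p :: (A ++ B ++ [p])) := by
        simpa using (((ShuffleEquiv.move_back hB).append_left A).cons p)
      have hN : ShuffleEquiv G (A ++ B) (A ++ B).reverse := by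
        refine (ShuffleEquiv.of_cons (x := p) ?_).of_append_singleton (x := p)
        simpa using hLN.symm.trans (h.trans (by simpa using hLN.reverse))
      obtain ⟨U, C, hC, hNUC⟩ := ih (A ++ B).length (by simp [← hn])
        ((hL.of_shuffleEquiv hLN).tail.of_append_left) hN rfl
      exact ⟨p :: U, C, hC, hLN.trans (by simpa using (hNUC.append_right [p]).cons p)⟩

theorem exists_clique_of_rev_eq {w : RAAG G} (hw : rev G w = w) :
    ∃ u C, G.IsClique (vertices C) ∧ w = u * wordProd G C * rev G u := by
  obtain ⟨L, hL, rfl⟩ := exists_isReduced_wordProd_eq w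
  obtain ⟨U, C, hC, hUC⟩ := exists_clique_of_shuffleEquiv_reverse hL
    (.of_wordProd_eq hL hL.reverse (by rw [wordProd_reverse, hw]))
  exact ⟨wordProd G U, C, hC, by rw [hUC.wordProd_eq]; simp [wordProd_reverse, mul_assoc]⟩

end RevFixed

section Automorphisms

variable {V : Type*} {G : SimpleGraph V}

def revCommSubgroup (G : SimpleGraph V) : Subgroup (MulAut (RAAG G)) where
  carrier := {α | ∀ w, α (rev G w) = rev G (α w)}
  one_mem' _ := rfl
  mul_mem' {α β} hα hβ w := by simp [hβ w, hα (β w)]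
  inv_mem' {α} hα w := α.injective (by rw [hα]; simp)

lemma mem_revCommSubgroup_iff {α : MulAut (RAAG G)} :
    α ∈ revCommSubgroup G ↔ ∀ i, rev G (α (gen G i)) = α (gen G i) := by
  refine ⟨fun h i => by simpa using (h (gen G i)).symm, fun h w => ?_⟩
  let f : RAAG G →* RAAG G := MonoidHom.mk' (fun w => rev G (α (rev G w))) fun x y => by
    simp [rev_mul]
  have hf : f = α.toMonoidHom := hom_ext fun i => by simp [f, h i]
  simpa [f] using (DFunLike.congr_fun hf (rev G w)).symm

def map {W : Type*} {G' : SimpleGraph W} (φ : G →g G') : RAAG G →* RAAG G' :=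
  PresentedGroup.toGroup (f := fun i => gen G' (φ i)) <| by
    rintro r ⟨i, j, hij, rfl⟩
    simp [(gen_commute (φ.map_adj hij)).eq]

@[simp] lemma map_gen {W : Type*} {G' : SimpleGraph W} (φ : G →g G') (i : V) :
    map φ (gen G i) = gen G' (φ i) :=
  PresentedGroup.toGroup.of _

def diagAut (φ : G ≃g G) : MulAut (RAAG G) :=
  MonoidHom.toMulEquiv (map φ) (map φ.symm) (hom_ext fun i => by simp)
    (hom_ext fun i => by simp)

@[simp] lemma diagAut_gen (φ : G ≃g G) (i : V) : diagAut φ (gen G i) = gen G (φ i) :=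
  map_gen _ i

def diagHom (G : SimpleGraph V) : (G ≃g G) →* MulAut (RAAG G) where
  toFun := diagAut
  map_one' := mulAut_ext fun i => by simp
  map_mul' φ ψ := mulAut_ext fun i => by simp [MulAut.mul_apply]

lemma mem_range_diagHom_iff {α : MulAut (RAAG G)} :
    α ∈ (diagHom G).range ↔ IsDiagramAut G α := by
  refine ⟨?_, fun ⟨φ, hφ⟩ => ⟨φ, mulAut_ext fun i => by simp [diagHom, hφ]⟩⟩
  rintro ⟨φ, rfl⟩
  exact ⟨φ, diagAut_gen φ⟩

lemma range_diagHom_le_revCommSubgroup : (diagHom G).range ≤ revCommSubgroup G := by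
  rintro _ ⟨φ, rfl⟩
  exact mem_revCommSubgroup_iff.2 fun i => by simp [diagHom]

/-- `σ⁻¹` is a power of `σ`, as `Equiv.Perm V` is finite. -/
lemma exists_iso_of_perm [Finite V] (σ : Equiv.Perm V)
    (h : ∀ i j, G.Adj i j → G.Adj (σ i) (σ j)) : ∃ φ : G ≃g G, ∀ i, φ i = σ i := by
  let S : Submonoid (Equiv.Perm V) :=
    { carrier := {τ | ∀ i j, G.Adj i j → G.Adj (τ i) (τ j)}
      mul_mem' := fun hτ hτ' i j hij => hτ _ _ (hτ' i j hij)
      one_mem' := fun _ _ hij => hij }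
  have hinv : σ⁻¹ ∈ S := (Submonoid.powers_le (P := S)).2 h
    (mem_powers_iff_mem_zpowers.2 (inv_mem (Subgroup.mem_zpowers σ)))
  exact ⟨⟨σ, fun {i j} => ⟨fun hij => by simpa using hinv _ _ hij, h i j⟩⟩,
    fun _ => rfl⟩

end Automorphisms

section Palindromes

variable {V : Type*} {G : SimpleGraph V}

lemma IsPalindrome.rev_eq {w : RAAG G} (h : IsPalindrome G w) : rev G w = w := by
  obtain ⟨L, hL, rfl⟩ := h
  rw [← wordProd_reverse, hL]

lemma wordProd_append_cons_reverse (L : List (V × Bool)) (x : V × Bool) :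
    wordProd G (L ++ x :: L.reverse) = wordProd G L * letter G x * rev G (wordProd G L) := by
  simp [wordProd_reverse, mul_assoc]

lemma isPalindrome_wordProd_append_cons_reverse (L : List (V × Bool)) (x : V × Bool) :
    IsPalindrome G (wordProd G (L ++ x :: L.reverse)) :=
  ⟨_, by simp, rfl⟩

end Palindromes

section Parity

lemma single_one_injective {ι R : Type*} [DecidableEq ι] [Zero R] [One R] [NeZero (1 : R)] :
    Function.Injective fun i : ι => (Pi.single i 1 : ι → R) := fun i j h => by
  by_contra hij
  simpa [Pi.single_apply, Ne.symm hij] using congrFun h j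

variable {n : ℕ} {G : SimpleGraph (Fin n)}

def mod2Hom (G : SimpleGraph (Fin n)) : RAAG G →* Multiplicative (Fin n → ZMod 2) where
  toFun w := .ofAdd (mod2Vec G w)
  map_one' := by ext; simp [mod2Vec, abVec]
  map_mul' x y := by ext; simp [mod2Vec, abVec]

lemma mod2Vec_mul (x y : RAAG G) : mod2Vec G (x * y) = mod2Vec G x + mod2Vec G y :=
  congrArg Multiplicative.toAdd (map_mul (mod2Hom G) x y)

lemma mod2Vec_zpow (x : RAAG G) (k : ℤ) : mod2Vec G (x ^ k) = k • mod2Vec G x :=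
  congrArg Multiplicative.toAdd (map_zpow (mod2Hom G) x k)

@[simp] lemma mod2Vec_gen (i : Fin n) : mod2Vec G (gen G i) = Pi.single i 1 := by
  ext u
  simp [mod2Vec, abVec, expSum, gen, Pi.single_apply, eq_comm]

@[simp] lemma mod2Vec_inv (x : RAAG G) : mod2Vec G x⁻¹ = mod2Vec G x := by
  rw [← zpow_neg_one, mod2Vec_zpow]
  ext
  simp [ZMod.neg_eq_self_mod_two]

@[simp] lemma mod2Vec_letter (p : Fin n × Bool) : mod2Vec G (letter G p) = Pi.single p.1 1 := by
  obtain ⟨v, _ | _⟩ := p <;> simp [letter]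

lemma mod2Vec_wordProd (L : List (Fin n × Bool)) :
    mod2Vec G (wordProd G L) = (L.map fun p => Pi.single p.1 1).sum := by
  induction L with
  | nil => ext; simp [mod2Vec, abVec]
  | cons p L ih => simp [mod2Vec_mul, ih]

lemma mod2Vec_wordProd_apply_eq_zero {L : List (Fin n × Bool)} {v : Fin n}
    (h : ∀ p ∈ L, p.1 ≠ v) : mod2Vec G (wordProd G L) v = 0 := by
  rw [mod2Vec_wordProd, Pi.list_sum_apply, List.map_map]
  refine List.sum_eq_zero fun x hx => ?_
  obtain ⟨p, hp, rfl⟩ := List.mem_map.1 hx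
  simp [Ne.symm (h p hp)]

lemma mem_vertices_of_mod2Vec_wordProd_ne_zero {L : List (Fin n × Bool)} {v : Fin n}
    (h : mod2Vec G (wordProd G L) v ≠ 0) : v ∈ vertices L := by
  by_contra hv
  exact h (mod2Vec_wordProd_apply_eq_zero fun p hp hpv => hv ⟨p, hp, hpv⟩)

@[simp] lemma mod2Vec_rev (w : RAAG G) : mod2Vec G (rev G w) = mod2Vec G w := by
  obtain ⟨L, rfl⟩ := exists_wordProd_eq w
  rw [← wordProd_reverse, mod2Vec_wordProd, mod2Vec_wordProd, List.map_reverse, List.sum_reverse]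

lemma mod2Vec_mul_mul_rev (u m : RAAG G) : mod2Vec G (u * m * rev G u) = mod2Vec G m := by
  rw [mod2Vec_mul, mod2Vec_mul, mod2Vec_rev, add_right_comm]
  ext
  simp only [Pi.add_apply, CharTwo.add_self_eq_zero, zero_add]

lemma exists_wordProd_eq_zpow_mul_of_mod2Vec {C : List (Fin n × Bool)}
    (hC : G.IsClique (vertices C)) {i : Fin n} (h : ∀ v ≠ i, mod2Vec G (wordProd G C) v = 0) :
    ∃ k : ℤ, wordProd G C = gen G i ^ k * wordProd G (C.filter (·.1 ≠ i)) ∧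
      (k : ZMod 2) = mod2Vec G (wordProd G C) i ∧
      mod2Vec G (wordProd G (C.filter (·.1 ≠ i))) = 0 := by
  obtain ⟨k, hk⟩ := exists_wordProd_eq_zpow_mul_of_isClique hC i
  have hpar := congrArg (mod2Vec G) hk
  rw [mod2Vec_mul, mod2Vec_zpow, mod2Vec_gen] at hpar
  have hi : mod2Vec G (wordProd G (C.filter (·.1 ≠ i))) i = 0 :=
    mod2Vec_wordProd_apply_eq_zero fun p hp => by simpa using (List.mem_filter.1 hp).2
  have hpari := congrFun hpar i
  rw [Pi.add_apply, hi, add_zero] at hpari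
  refine ⟨k, hk, by simpa using hpari.symm, funext fun v => ?_⟩
  by_cases hv : v = i
  · exact hv ▸ hi
  · simpa [hv, h v hv] using (congrFun hpar v).symm

lemma exists_sq_of_isClique {C : List (Fin n × Bool)} (hC : G.IsClique (vertices C))
    (h : mod2Vec G (wordProd G C) = 0) :
    ∃ u, wordProd G C = u * u ∧ rev G u = u ∧
      ∀ x, (∀ p ∈ C, Commute x (gen G p.1)) → Commute x u := by
  induction hn : C.length using Nat.strong_induction_on generalizing C with
  | _ m ih =>
  cases C with
  | nil => exact ⟨1, by simp, by simp, fun x _ => Commute.one_right x⟩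
  | cons p C =>
    obtain ⟨k, hk, hkp, hrest⟩ := exists_wordProd_eq_zpow_mul_of_mod2Vec hC (i := p.1)
      (fun v _ => by rw [h]; rfl)
    obtain ⟨l, rfl⟩ : Even k := ZMod.intCast_eq_zero_iff_even.1 (by rw [hkp, h]; rfl)
    set D := (p :: C).filter (·.1 ≠ p.1)
    have hD : D.Sublist (p :: C) := List.filter_sublist
    have hlt : D.length < m := by
      simpa [D, ← hn] using Nat.lt_succ_of_le (List.length_filter_le _ C)
    obtain ⟨u, hu, hru, hcomm⟩ := ih D.length hlt (isClique_vertices_of_sublist hC hD) hrest rfl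
    have hpu : Commute (gen G p.1 ^ l) u := hcomm _ fun q hq =>
      (commute_gen_of_mem_filter hC ⟨p, List.mem_cons_self, rfl⟩ hq).zpow_left l
    refine ⟨gen G p.1 ^ l * u, ?_, ?_, fun x hx => ?_⟩
    · rw [hk, hu, zpow_add]
      simp only [mul_assoc]
      rw [← mul_assoc u, ← hpu.eq, mul_assoc]
    · rw [rev_mul, hru, rev_zpow, rev_gen, hpu.eq]
    · exact ((hx p List.mem_cons_self).zpow_right l).mul_right
        (hcomm x fun q hq => hx q (hD.subset hq))

lemma exists_eq_mul_gen_mul_rev_of_isClique {C : List (Fin n × Bool)} {i : Fin n}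
    (hC : G.IsClique (vertices C)) (h : mod2Vec G (wordProd G C) = Pi.single i 1) :
    ∃ u, wordProd G C = u * gen G i * rev G u := by
  obtain ⟨k, hk, hki, hrest⟩ := exists_wordProd_eq_zpow_mul_of_mod2Vec hC (i := i)
    (fun v hv => by simp [h, hv])
  obtain ⟨l, rfl⟩ : Odd k := ZMod.intCast_eq_one_iff_odd.1 (by simp [hki, h])
  have hD : (C.filter (·.1 ≠ i)).Sublist C := List.filter_sublist
  obtain ⟨u, hu, hru, hcomm⟩ := exists_sq_of_isClique (isClique_vertices_of_sublist hC hD) hrest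
  have hi : i ∈ vertices C := mem_vertices_of_mod2Vec_wordProd_ne_zero (G := G) (by simp [h])
  have hiu : Commute (gen G i) u := hcomm _ fun q => commute_gen_of_mem_filter hC hi
  have hlu : Commute (gen G i ^ l) u := hcomm _ fun q hq =>
    (commute_gen_of_mem_filter hC hi hq).zpow_left l
  refine ⟨gen G i ^ l * u, ?_⟩
  rw [hk, hu, rev_mul, hru, rev_zpow, rev_gen, zpow_add_one, two_mul, zpow_add]
  simp only [mul_assoc]
  congr 1
  rw [← hlu.eq, ← hiu.left_comm, ← hlu.left_comm, ((Commute.refl _).zpow_right l).left_comm]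

lemma adj_of_rev_eq {w : RAAG G} (hw : rev G w = w) {a b : Fin n} (hab : a ≠ b)
    (ha : mod2Vec G w a ≠ 0) (hb : mod2Vec G w b ≠ 0) : G.Adj a b := by
  obtain ⟨u, C, hC, rfl⟩ := exists_clique_of_rev_eq hw
  rw [mod2Vec_mul_mul_rev] at ha hb
  exact hC (mem_vertices_of_mod2Vec_wordProd_ne_zero ha)
    (mem_vertices_of_mod2Vec_wordProd_ne_zero hb) hab

lemma exists_eq_wordProd_of_rev_eq {w : RAAG G} {i : Fin n} (hw : rev G w = w)
    (h : mod2Vec G w = Pi.single i 1) :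
    ∃ L : List (Fin n × Bool), w = wordProd G (L ++ (i, true) :: L.reverse) := by
  obtain ⟨u, C, hC, rfl⟩ := exists_clique_of_rev_eq hw
  rw [mod2Vec_mul_mul_rev] at h
  obtain ⟨v, hv⟩ := exists_eq_mul_gen_mul_rev_of_isClique hC h
  obtain ⟨L, hL⟩ := exists_wordProd_eq (u * v)
  exact ⟨L, by simp [wordProd_reverse, hL, hv, rev_mul, mul_assoc]⟩

end Parity

section Mod2Rep

variable {n : ℕ} {G : SimpleGraph (Fin n)}

lemma mod2Vec_wordProd_of_palindrome {L : List (Fin n × Bool)} (hL : L.Palindrome) :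
    mod2Vec G (wordProd G L) = 0 ∨ ∃ i, mod2Vec G (wordProd G L) = Pi.single i 1 := by
  induction hL with
  | nil => exact .inl (by ext; simp [mod2Vec, abVec])
  | singleton x => exact .inr ⟨x.1, by simp⟩
  | cons_concat x _ ih =>
      rename_i l _
      rwa [show wordProd G (x :: (l ++ [x])) = letter G x * wordProd G l * rev G (letter G x) by
        simp [mul_assoc], mod2Vec_mul_mul_rev]

lemma IsPalindrome.mod2Vec_eq {w : RAAG G} (h : IsPalindrome G w) :
    mod2Vec G w = 0 ∨ ∃ i, mod2Vec G w = Pi.single i 1 := by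
  obtain ⟨L, hL, rfl⟩ := h
  exact mod2Vec_wordProd_of_palindrome (List.Palindrome.iff_reverse_eq.2 hL)

lemma isPalindrome_of_rev_eq {w : RAAG G} {i : Fin n} (hw : rev G w = w)
    (h : mod2Vec G w = Pi.single i 1) : IsPalindrome G w := by
  obtain ⟨L, rfl⟩ := exists_eq_wordProd_of_rev_eq hw h
  exact isPalindrome_wordProd_append_cons_reverse L _

/-- The matrix by which `α` acts on `H₁(A_Γ; ℤ/2) = (ℤ/2)ⁿ`. -/
def mod2Matrix (α : MulAut (RAAG G)) : Matrix (Fin n) (Fin n) (ZMod 2) :=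
  Matrix.of fun u v => mod2Vec G (α (gen G v)) u

lemma mod2Vec_map (α : MulAut (RAAG G)) (w : RAAG G) :
    mod2Vec G (α w) = (mod2Matrix α).mulVec (mod2Vec G w) := by
  have : (mod2Hom G).comp α.toMonoidHom = (AddMonoidHom.toMultiplicative
      (mod2Matrix α).mulVecLin.toAddMonoidHom).comp (mod2Hom G) :=
    hom_ext fun i => by
      simp [mod2Hom]
      rfl
  exact congrArg Multiplicative.toAdd (DFunLike.congr_fun this w)

def mod2Rep (G : SimpleGraph (Fin n)) : MulAut (RAAG G) →* GL (Fin n) (ZMod 2) :=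
  MonoidHom.toHomUnits
    { toFun := mod2Matrix
      map_one' := by ext u v; simp [mod2Matrix, Matrix.one_apply, Pi.single_apply]
      map_mul' α β := by
        ext u v
        simp [mod2Matrix, Matrix.mul_apply, mod2Vec_map α (β (gen G v)), Matrix.mulVec,
          dotProduct] }

lemma mod2Rep_eq_mod2Rep_iff {α β : MulAut (RAAG G)} :
    mod2Rep G α = mod2Rep G β ↔ ∀ i, mod2Vec G (α (gen G i)) = mod2Vec G (β (gen G i)) :=
  ⟨fun h i => funext fun u => congrArg (fun g : GL (Fin n) (ZMod 2) => g.1 u i) h,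
    fun h => Matrix.GeneralLinearGroup.ext fun u v => congrFun (h v) u⟩

lemma mem_ker_mod2Rep_iff {α : MulAut (RAAG G)} :
    α ∈ (mod2Rep G).ker ↔ ∀ i, mod2Vec G (α (gen G i)) = Pi.single i 1 := by
  rw [MonoidHom.mem_ker, ← map_one (mod2Rep G), mod2Rep_eq_mod2Rep_iff]
  simp

lemma mod2Vec_map_gen_injective (α : MulAut (RAAG G)) :
    Function.Injective fun i => mod2Vec G (α (gen G i)) := by
  intro i j (h : mod2Vec G (α (gen G i)) = mod2Vec G (α (gen G j)))
  have key (k : Fin n) :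
      Pi.single k 1 = (mod2Matrix α⁻¹).mulVec (mod2Vec G (α (gen G k))) := by
    rw [← mod2Vec_map]
    simp
  exact single_one_injective (R := ZMod 2) (show Pi.single i 1 = Pi.single j 1 by
    rw [key i, key j, h])

lemma mod2Vec_map_gen_ne_zero (α : MulAut (RAAG G)) (i : Fin n) :
    mod2Vec G (α (gen G i)) ≠ 0 := by
  intro h
  have := mod2Vec_map α⁻¹ (α (gen G i))
  simp [h] at this

lemma exists_perm_of_isPalAut {α : MulAut (RAAG G)} (hα : IsPalAut G α) :
    ∃ σ : Equiv.Perm (Fin n), ∀ i, mod2Vec G (α (gen G i)) = Pi.single (σ i) 1 := by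
  choose τ hτ using fun i => (hα i).mod2Vec_eq.resolve_left (mod2Vec_map_gen_ne_zero α i)
  have hτinj : Function.Injective τ := fun i j h =>
    mod2Vec_map_gen_injective α (by simp [hτ, h])
  exact ⟨Equiv.ofBijective τ hτinj.bijective_of_finite, hτ⟩

lemma adj_of_isPalAut {α : MulAut (RAAG G)} (hα : IsPalAut G α) {σ : Equiv.Perm (Fin n)}
    (hσ : ∀ i, mod2Vec G (α (gen G i)) = Pi.single (σ i) 1) {i j : Fin n} (hij : G.Adj i j) :
    G.Adj (σ i) (σ j) := by
  have hne : σ i ≠ σ j := σ.injective.ne (G.ne_of_adj hij)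
  have hrev : rev G (α (gen G i * gen G j)) = α (gen G i * gen G j) := by
    rw [map_mul, rev_mul, (hα i).rev_eq, (hα j).rev_eq, ← map_mul, ← map_mul,
      (gen_commute hij).eq]
  have hpar : mod2Vec G (α (gen G i * gen G j)) = Pi.single (σ i) 1 + Pi.single (σ j) 1 := by
    rw [map_mul, mod2Vec_mul, hσ, hσ]
  exact adj_of_rev_eq hrev hne (by rw [hpar]; simp [hne.symm]) (by rw [hpar]; simp [hne])

/-- `ΠA_Γ` in a form that is visibly a subgroup; `mem_palSubgroup_iff` identifies the two. -/
def palSubgroup (G : SimpleGraph (Fin n)) : Subgroup (MulAut (RAAG G)) :=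
  revCommSubgroup G ⊓ ((diagHom G).range.map (mod2Rep G)).comap (mod2Rep G)

def purePalSubgroup (G : SimpleGraph (Fin n)) : Subgroup (MulAut (RAAG G)) :=
  revCommSubgroup G ⊓ (mod2Rep G).ker

theorem mem_palSubgroup_iff {α : MulAut (RAAG G)} : α ∈ palSubgroup G ↔ IsPalAut G α := by
  simp only [palSubgroup, Subgroup.mem_inf, Subgroup.mem_comap, Subgroup.mem_map,
    MonoidHom.mem_range, mem_revCommSubgroup_iff]
  constructor
  · rintro ⟨hrev, _, ⟨φ, rfl⟩, hφ⟩ i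
    refine isPalindrome_of_rev_eq (hrev i) (i := φ i) ?_
    simpa [diagHom] using (mod2Rep_eq_mod2Rep_iff.1 hφ i).symm
  · intro hα
    obtain ⟨σ, hσ⟩ := exists_perm_of_isPalAut hα
    obtain ⟨φ, hφ⟩ := exists_iso_of_perm σ fun i j => adj_of_isPalAut hα hσ
    exact ⟨fun i => (hα i).rev_eq, _, ⟨φ, rfl⟩,
      mod2Rep_eq_mod2Rep_iff.2 fun i => by simp [diagHom, hσ, hφ]⟩

theorem mem_purePalSubgroup_iff {α : MulAut (RAAG G)} :
    α ∈ purePalSubgroup G ↔ IsPurePalAut G α := by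
  simp only [purePalSubgroup, Subgroup.mem_inf, mem_revCommSubgroup_iff, mem_ker_mod2Rep_iff,
    ← forall_and]
  refine forall_congr' fun i => ⟨fun ⟨hrev, hpar⟩ => ?_, ?_⟩
  · obtain ⟨L, hL⟩ := exists_eq_wordProd_of_rev_eq hrev hpar
    exact ⟨L, true, hL⟩
  · rintro ⟨L, b, h⟩
    rw [h, wordProd_append_cons_reverse]
    exact ⟨by simp [rev_mul, mul_assoc], by simp [mod2Vec_mul_mul_rev]⟩

lemma purePalSubgroup_le_palSubgroup : purePalSubgroup G ≤ palSubgroup G :=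
  inf_le_inf_left _ fun _ hα =>
    ⟨1, one_mem _, (map_one _).trans (MonoidHom.mem_ker.1 hα).symm⟩

lemma range_diagHom_le_palSubgroup : (diagHom G).range ≤ palSubgroup G := fun d hd =>
  ⟨range_diagHom_le_revCommSubgroup hd, d, hd, rfl⟩

lemma conj_mem_purePalSubgroup {p q : MulAut (RAAG G)} (hp : p ∈ revCommSubgroup G)
    (hq : q ∈ purePalSubgroup G) : p * q * p⁻¹ ∈ purePalSubgroup G := by
  rw [purePalSubgroup, Subgroup.mem_inf] at hq ⊢
  exact ⟨mul_mem (mul_mem hp hq.1) (inv_mem hp), (mod2Rep G).normal_ker.conj_mem q hq.2 p⟩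

lemma purePalSubgroup_inf_range_diagHom : purePalSubgroup G ⊓ (diagHom G).range = ⊥ := by
  refine eq_bot_iff.2 fun α hα => ?_
  obtain ⟨⟨-, hker⟩, φ, rfl⟩ := Subgroup.mem_inf.1 hα
  have hφ (i : Fin n) : φ i = i := single_one_injective
    (by simpa [diagHom] using mem_ker_mod2Rep_iff.1 hker i)
  exact Subgroup.mem_bot.2 (mulAut_ext fun i => by simp [diagHom, hφ])

/-- If `mod2Rep α = mod2Rep d` with `d` diagrammatic, then `α = (α d⁻¹) d` with `α d⁻¹` pure. -/
lemma purePalSubgroup_sup_range_diagHom :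
    purePalSubgroup G ⊔ (diagHom G).range = palSubgroup G := by
  refine le_antisymm (sup_le purePalSubgroup_le_palSubgroup range_diagHom_le_palSubgroup)
    fun α hα => ?_
  obtain ⟨hrev, hα⟩ := Subgroup.mem_inf.1 hα
  obtain ⟨d, hd, hρ⟩ := Subgroup.mem_map.1 (Subgroup.mem_comap.1 hα)
  rw [← inv_mul_cancel_right α d]
  refine mul_mem (Subgroup.mem_sup_left (Subgroup.mem_inf.2 ⟨?_, ?_⟩))
    (Subgroup.mem_sup_right hd)
  · exact mul_mem hrev (inv_mem (range_diagHom_le_revCommSubgroup hd))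
  · exact MonoidHom.mem_ker.2 (by rw [map_mul, map_inv, hρ, mul_inv_cancel])

end Mod2Rep

end RaagPal

open RaagPal in
/-- `ΠA_Γ` is a subgroup of `Aut(A_Γ)` and splits as the internal
semidirect product `ΠPA_Γ ⋊ D_Γ`: there are subgroups with carriers the palindromic
automorphisms, the pure palindromic automorphisms and the diagram automorphisms,
respectively, such that `ΠPA_Γ` is normal in `ΠA_Γ`, `ΠPA_Γ ⊓ D_Γ = ⊥` and
`ΠPA_Γ ⊔ D_Γ = ΠA_Γ`. -/
theorem palAut_splits (n : ℕ) (G : SimpleGraph (Fin n)) :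
    ∃ PA PPA D : Subgroup (MulAut (RAAG G)),
      (PA : Set (MulAut (RAAG G))) = {α | IsPalAut G α} ∧
      (PPA : Set (MulAut (RAAG G))) = {α | IsPurePalAut G α} ∧
      (D : Set (MulAut (RAAG G))) = {α | IsDiagramAut G α} ∧
      PPA ≤ PA ∧ D ≤ PA ∧
      (∀ p ∈ PA, ∀ q ∈ PPA, p * q * p⁻¹ ∈ PPA) ∧
      PPA ⊓ D = ⊥ ∧ PPA ⊔ D = PA := by
  refine ⟨palSubgroup G, purePalSubgroup G, (diagHom G).range,
    Set.ext fun _ => mem_palSubgroup_iff, Set.ext fun _ => mem_purePalSubgroup_iff,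
    Set.ext fun _ => mem_range_diagHom_iff, purePalSubgroup_le_palSubgroup,
    range_diagHom_le_palSubgroup,
    fun p hp q hq => conj_mem_purePalSubgroup (Subgroup.mem_inf.1 hp).1 hq,
    purePalSubgroup_inf_range_diagHom, purePalSubgroup_sup_range_diagHom⟩
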